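/- For every i with 1 ≤ i ≤ n−1 and every p ∈ R: for each v ∈ S_n the polynomial p(v) − p(v s_i) is divisible by t_{v(i+1)} − t_{v(i)}, the tuple ∂_i p whose v-th component is the quotient (p(v) − p(v s_i))/(t_{v(i+1)} − t_{v(i)}) again lies in R, and ∂_i : R → R is a ℂ[t_1,…,t_n]-module homomorphism. -/
import Mathlib


open MvPolynomial Equiv Finset

noncomputable section

/-- The polynomial ring ℂ[t₁,…,tₙ]. -/
abbrev Pol (n : ℕ) : Type := MvPolynomial (Fin n) ℂ

/-- The action of a permutation `w` on polynomials by the substitution `tᵢ ↦ t_{w(i)}`. -/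
def pact {n : ℕ} (w : Perm (Fin n)) (f : Pol n) : Pol n := rename ⇑w f

/-- The GKM condition defining `R ⊆ ∏_{v ∈ Sₙ} ℂ[t₁,…,tₙ]`: for every `v` and every
transposition `(i j)` with `i < j`, the difference `p(v) − p((i j)v)` is divisible by
`tᵢ − tⱼ`. -/
def GKM (n : ℕ) (p : Perm (Fin n) → Pol n) : Prop :=
  ∀ (v : Perm (Fin n)) (i j : Fin n), i < j →
    (X i - X j : Pol n) ∣ (p v - p (Equiv.swap i j * v))

/-- The length of a permutation: its number of inversions. -/
def len {n : ℕ} (w : Perm (Fin n)) : ℕ :=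
  (Finset.univ.filter fun q : Fin n × Fin n => q.1 < q.2 ∧ w q.2 < w q.1).card

/-- Bruhat order: the partial order generated by `u < (i j) u` whenever `ℓ(u) < ℓ((i j)u)`. -/
def bruhatLE {n : ℕ} : Perm (Fin n) → Perm (Fin n) → Prop :=
  Relation.ReflTransGen
    (fun u v => (∃ i j : Fin n, i < j ∧ v = Equiv.swap i j * u) ∧ len u < len v)

/-- `p` is the canonical class (equivariant Schubert class) of `w`:
(i) each component is homogeneous of degree `ℓ(w)`; (ii) `p(v) = 0` unless `v ≥ w` in
Bruhat order; (iii) `p(w) = ∏ (tᵢ − tⱼ)` over pairs `i < j` with `ℓ((i j)w) < ℓ(w)`;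
and `p` satisfies the GKM conditions. -/
def IsCanonical {n : ℕ} (w : Perm (Fin n)) (p : Perm (Fin n) → Pol n) : Prop :=
  GKM n p ∧
  (∀ v, (p v).IsHomogeneous (len w)) ∧
  (∀ v, ¬ bruhatLE w v → p v = 0) ∧
  p w = ∏ q ∈ Finset.univ.filter
      (fun q : Fin n × Fin n => q.1 < q.2 ∧ len (Equiv.swap q.1 q.2 * w) < len w),
      (X q.1 - X q.2 : Pol n)

/-- The simple transposition `sᵢ = (i, i+1)`. -/
def sT (n i : ℕ) (h : i + 1 < n) : Perm (Fin n) :=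
  Equiv.swap ⟨i, Nat.lt_of_succ_lt h⟩ ⟨i + 1, h⟩

/-- The dot (left) action: `(w·p)(v) = w(p(w⁻¹ v))`. -/
def dot {n : ℕ} (w : Perm (Fin n)) (p : Perm (Fin n) → Pol n) : Perm (Fin n) → Pol n :=
  fun v => pact w (p (w⁻¹ * v))

/-- The star (right) action: `(p * w)(v) = p(vw)`. -/
def starAct {n : ℕ} (p : Perm (Fin n) → Pol n) (w : Perm (Fin n)) :
    Perm (Fin n) → Pol n :=
  fun v => p (v * w)

/-- `R` as a `ℂ[t₁,…,tₙ]`-submodule of the product. -/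
def gkmSubmodule (n : ℕ) : Submodule (Pol n) (Perm (Fin n) → Pol n) where
  carrier := {p | GKM n p}
  add_mem' := by
    intro a b ha hb v i j hij
    have h := dvd_add (ha v i j hij) (hb v i j hij)
    simpa [Pi.add_apply, add_sub_add_comm] using h
  zero_mem' := by
    intro v i j hij
    simp
  smul_mem' := by
    intro c p hp v i j hij
    have h := (hp v i j hij).mul_left c
    simpa [Pi.smul_apply, smul_eq_mul, mul_sub] using h

/-- The maximal ideal `𝔪 = (t₁,…,tₙ) ⊆ ℂ[t₁,…,tₙ]`. -/
def mIdeal (n : ℕ) : Ideal (Pol n) := Ideal.span (Set.range (X : Fin n → Pol n))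

/-- The submodule `𝔪R`: finite sums of products `c • p` with `c ∈ 𝔪` and `p ∈ R`. -/
def mR (n : ℕ) : Submodule (Pol n) (Perm (Fin n) → Pol n) :=
  Submodule.span (Pol n) {q | ∃ c ∈ mIdeal n, ∃ p, GKM n p ∧ q = c • p}

section Aux
variable {n : ℕ}

def phiSub (k l : Fin n) : Pol n →ₐ[ℂ] Pol n :=
  aeval (fun m => if m = k then X l else X m)

lemma phiSub_dvd_sub (k l : Fin n) (f : Pol n) :
    (X k - X l : Pol n) ∣ f - phiSub k l f := by
  induction f using MvPolynomial.induction_on with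
  | C c => simp [phiSub]
  | add f g hf hg => simpa [add_sub_add_comm] using dvd_add hf hg
  | mul_X f m hf =>
      have h2 : (X k - X l : Pol n) ∣ X m - phiSub k l (X m) := by
        by_cases hm : m = k
        · subst hm
          have he : phiSub m l (X m) = X l := by simp [phiSub]
          rw [he]
        · simp [phiSub, hm]
      have key : f * X m - phiSub k l (f * X m)
          = (f - phiSub k l f) * phiSub k l (X m) + f * (X m - phiSub k l (X m)) := by
        rw [map_mul]; ring
      rw [key]
      exact dvd_add (hf.mul_right _) (h2.mul_left f)

lemma X_sub_X_ne_zero {k l : Fin n} (hkl : k ≠ l) : (X k - X l : Pol n) ≠ 0 :=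
  sub_ne_zero.mpr (fun h => hkl (X_injective h))

lemma prime_X_sub_X {k l : Fin n} (hkl : k ≠ l) : Prime (X k - X l : Pol n) := by
  rw [← Ideal.span_singleton_prime (X_sub_X_ne_zero hkl)]
  have hker : Ideal.span {(X k - X l : Pol n)} = RingHom.ker (phiSub k l).toRingHom := by
    apply le_antisymm
    · rw [Ideal.span_le]
      rintro x hx
      rcases hx with rfl
      simp [RingHom.mem_ker, phiSub]
    · intro f hf
      rw [Ideal.mem_span_singleton]
      have h := phiSub_dvd_sub k l f
      have h0 : phiSub k l f = 0 := hf
      rwa [h0, sub_zero] at h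
  rw [hker]
  exact RingHom.ker_isPrime _

lemma dvd_linear {k l a b : Fin n} (hab : a ≠ b)
    (h : (X k - X l : Pol n) ∣ (X a - X b)) :
    (a = k ∧ b = l) ∨ (a = l ∧ b = k) := by
  have h0 : phiSub k l (X a - X b : Pol n) = 0 := by
    obtain ⟨c, hc⟩ := h
    rw [hc, map_mul, map_sub]
    simp [phiSub]
  rw [map_sub, sub_eq_zero] at h0
  simp only [phiSub, aeval_X] at h0
  by_cases ha : a = k <;> by_cases hb : b = k
  · exact absurd (ha.trans hb.symm) hab
  · rw [if_pos ha, if_neg hb] at h0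
    exact Or.inl ⟨ha, (X_injective h0).symm⟩
  · rw [if_neg ha, if_pos hb] at h0
    exact Or.inr ⟨X_injective h0, hb⟩
  · rw [if_neg ha, if_neg hb] at h0
    exact absurd (X_injective h0) hab

lemma dvd_X_swap {k l : Fin n} (m : Fin n) :
    (X k - X l : Pol n) ∣ (X (Equiv.swap k l m) - X m) := by
  rcases eq_or_ne m k with rfl | hmk
  · rw [swap_apply_left]; exact ⟨-1, by ring⟩
  rcases eq_or_ne m l with rfl | hml
  · rw [swap_apply_right]
  · rw [swap_apply_of_ne_of_ne hmk hml, sub_self]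
    exact dvd_zero _

open Classical in
def quo (f g : Pol n) : Pol n := if h : f ∣ g then h.choose else 0

lemma quo_spec {f g : Pol n} (h : f ∣ g) : g = f * quo f g := by
  rw [quo, dif_pos h]; exact h.choose_spec

lemma quo_eq {f g c : Pol n} (hf : f ≠ 0) (h : g = f * c) : quo f g = c :=
  mul_left_cancel₀ hf ((quo_spec ⟨c, h⟩).symm.trans h)

end Aux

/-- The divided difference operator, defined componentwise via `quo`. -/
def ddFun (n i : ℕ) (hi : i + 1 < n) (p : Perm (Fin n) → Pol n) :
    Perm (Fin n) → Pol n :=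
  fun v => quo (X (v ⟨i + 1, hi⟩) - X (v ⟨i, Nat.lt_of_succ_lt hi⟩))
    (p v - p (v * sT n i hi))

/-- for each `i`, each component `p(v) − p(vsᵢ)` is divisible by
`t_{v(i+1)} − t_{v(i)}`; the componentwise quotient `∂ᵢ p` again lies in `R`; and
`∂ᵢ : R → R` is a `ℂ[t₁,…,tₙ]`-module homomorphism. -/
theorem kostant_kumar_divided_difference_well_defined (n : ℕ) (hn : 1 ≤ n)
    (i : ℕ) (hi : i + 1 < n) :
    ∃ dd : (Perm (Fin n) → Pol n) → (Perm (Fin n) → Pol n),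
      (∀ p, GKM n p → ∀ v,
        p v - p (v * sT n i hi)
          = (X (v ⟨i + 1, hi⟩) - X (v ⟨i, by omega⟩) : Pol n) * dd p v) ∧
      (∀ p, GKM n p → GKM n (dd p)) ∧
      (∀ p q, GKM n p → GKM n q → dd (p + q) = dd p + dd q) ∧
      (∀ (c : Pol n) (p), GKM n p → dd (c • p) = c • dd p) := by
  classical
  set i0 : Fin n := ⟨i, Nat.lt_of_succ_lt hi⟩ with hi0def
  set i1 : Fin n := ⟨i + 1, hi⟩ with hi1def
  have h01 : i0 ≠ i1 := by
    simp [hi0def, hi1def, Fin.ext_iff]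
  have hs : sT n i hi = Equiv.swap i0 i1 := rfl
  have hvne : ∀ v : Perm (Fin n), v i1 ≠ v i0 :=
    fun v h => h01 (v.injective h).symm
  have hconj : ∀ v : Perm (Fin n),
      Equiv.swap (v i0) (v i1) * v = v * sT n i hi := by
    intro v
    rw [hs, swap_apply_apply]
    group
  have hdvd : ∀ p, GKM n p → ∀ v : Perm (Fin n),
      (X (v i1) - X (v i0) : Pol n) ∣ (p v - p (v * sT n i hi)) := by
    intro p hp v
    rcases lt_trichotomy (v i0) (v i1) with h | h | h
    · have h1 := hp v (v i0) (v i1) h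
      rw [hconj] at h1
      have he : (X (v i1) - X (v i0) : Pol n) = -(X (v i0) - X (v i1)) := by ring
      rw [he]
      exact (neg_dvd).mpr h1
    · exact absurd h.symm (hvne v)
    · have h1 := hp v (v i1) (v i0) h
      rwa [swap_comm, hconj] at h1
  have hspec : ∀ p, GKM n p → ∀ v : Perm (Fin n),
      p v - p (v * sT n i hi) = (X (v i1) - X (v i0)) * ddFun n i hi p v :=
    fun p hp v => quo_spec (hdvd p hp v)
  refine ⟨ddFun n i hi, fun p hp v => hspec p hp v, ?_, ?_, ?_⟩
  · -- GKM preserved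
    intro p hp v k l hkl
    have hne_kl : k ≠ l := ne_of_lt hkl
    have hspec_v := hspec p hp v
    have hspec_u := hspec p hp (Equiv.swap k l * v)
    by_cases hcase : Equiv.swap k l * v = v * sT n i hi
    · -- the two components are equal
      have hEq : ddFun n i hi p (Equiv.swap k l * v) = ddFun n i hi p v := by
        rw [hcase]
        have hA1 : (v * sT n i hi) i1 = v i0 := by
          simp [hs, Perm.mul_apply, swap_apply_right]
        have hA0 : (v * sT n i hi) i0 = v i1 := by
          simp [hs, Perm.mul_apply, swap_apply_left]
        have hA2 : v * sT n i hi * sT n i hi = v := by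
          rw [mul_assoc, hs, swap_mul_self, mul_one]
        show quo (X ((v * sT n i hi) i1) - X ((v * sT n i hi) i0))
            (p (v * sT n i hi) - p (v * sT n i hi * sT n i hi)) = ddFun n i hi p v
        rw [hA1, hA0, hA2]
        exact quo_eq (X_sub_X_ne_zero (hvne v).symm) (by linear_combination -hspec_v)
      rw [hEq, sub_self]
      exact dvd_zero _
    · -- the interesting case
      have hnd : ¬ ((X k - X l : Pol n) ∣ (X (v i1) - X (v i0))) := by
        intro hd
        rcases dvd_linear (hvne v) hd with ⟨h1, h2⟩ | ⟨h1, h2⟩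
        · exact hcase (by rw [← h1, ← h2, swap_comm]; exact hconj v)
        · exact hcase (by rw [← h2, ← h1]; exact hconj v)
      have h1 := hp v k l hkl
      have h2 := hp (v * sT n i hi) k l hkl
      rw [← mul_assoc] at h2
      have h3 : (X k - X l : Pol n) ∣
          (X ((Equiv.swap k l * v) i1) - X (v i1)) := by
        simpa [Perm.mul_apply] using dvd_X_swap (k := k) (l := l) (v i1)
      have h4 : (X k - X l : Pol n) ∣
          (X ((Equiv.swap k l * v) i0) - X (v i0)) := by
        simpa [Perm.mul_apply] using dvd_X_swap (k := k) (l := l) (v i0)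
      have key : (X (v i1) - X (v i0) : Pol n) *
            (ddFun n i hi p v - ddFun n i hi p (Equiv.swap k l * v))
          = ((p v - p (Equiv.swap k l * v))
              - (p (v * sT n i hi) - p (Equiv.swap k l * v * sT n i hi)))
            + ((X ((Equiv.swap k l * v) i1) - X (v i1))
              - ((X ((Equiv.swap k l * v) i0) - X (v i0))))
              * ddFun n i hi p (Equiv.swap k l * v) := by
        linear_combination hspec_u - hspec_v
      have hdd : (X k - X l : Pol n) ∣
          (X (v i1) - X (v i0)) *
            (ddFun n i hi p v - ddFun n i hi p (Equiv.swap k l * v)) := by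
        rw [key]
        exact dvd_add (dvd_sub h1 h2) ((dvd_sub h3 h4).mul_right _)
      rcases (prime_X_sub_X hne_kl).2.2 _ _ hdd with hout | hout
      · exact absurd hout hnd
      · exact hout
  · -- additivity
    intro p q hp hq
    funext v
    have h1 := hspec p hp v
    have h2 := hspec q hq v
    refine quo_eq (X_sub_X_ne_zero (hvne v)) ?_
    show (p + q) v - (p + q) (v * sT n i hi)
        = (X (v i1) - X (v i0)) * (ddFun n i hi p v + ddFun n i hi q v)
    simp only [Pi.add_apply]
    linear_combination h1 + h2
  · -- ℂ[t]-linearity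
    intro c p hp
    funext v
    have h1 := hspec p hp v
    refine quo_eq (X_sub_X_ne_zero (hvne v)) ?_
    show (c • p) v - (c • p) (v * sT n i hi)
        = (X (v i1) - X (v i0)) * (c • ddFun n i hi p v)
    simp only [Pi.smul_apply, smul_eq_mul]
    linear_combination c * h1
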